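/- arXiv:2202.00437 — 2 statements merged into one kernel-verified Lean document; each statement's English description precedes it below -/
import Mathlib

section
/- Let β=(β_n)_{n∈ℕ} be a Cantor base with x_β<+∞. For all x∈[0,1) and all n∈ℕ, the lazy digits and remainders of x_β−x are obtained by flipping the greedy digits and remainders of x: ξ_{β,n}(x_β−x)=⌈β_n⌉−1−ε_{β,n}(x) and s_{β,n}(x_β−x)=x_{β^(n+1)}−r_{β,n}(x). In particular, ℓ_β(x_β−x)=θ_β(d_β(x)). -/
open Filter Topology

/-- A Cantor real base: a sequence of reals `> 1` whose infinite product diverges to `+∞`. -/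
structure IsCantorBase (β : ℕ → ℝ) : Prop where
  one_lt : ∀ n, 1 < β n
  prod_tendsto : Tendsto (fun N => ∏ i ∈ Finset.range N, β i) atTop atTop

/-- The product `β_0 ⋯ β_n`. -/
noncomputable def prodUpTo (β : ℕ → ℝ) (n : ℕ) : ℝ := ∏ i ∈ Finset.range (n + 1), β i

/-- The shifted base `β^(n) = (β_n, β_{n+1}, …)`. -/
def shiftBase (β : ℕ → ℝ) (n : ℕ) : ℕ → ℝ := fun m => β (n + m)

/-- `x_β = Σ_{n} (⌈β_n⌉ - 1)/(β_0 ⋯ β_n)`. -/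
noncomputable def xB (β : ℕ → ℝ) : ℝ := ∑' n, ((⌈β n⌉ : ℝ) - 1) / prodUpTo β n

/-- The condition `x_β < +∞`, i.e. the series defining `x_β` converges. -/
def XBSummable (β : ℕ → ℝ) : Prop :=
  Summable (fun n => ((⌈β n⌉ : ℝ) - 1) / prodUpTo β n)

/-- `val_β(a) = Σ_n a_n/(β_0 ⋯ β_n)`. -/
noncomputable def valB (β : ℕ → ℝ) (a : ℕ → ℤ) : ℝ := ∑' n, (a n : ℝ) / prodUpTo β n

/-- The digit condition `a_n ∈ [[0, ⌈β_n⌉ - 1]]` for all `n`. -/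
def validWord (β : ℕ → ℝ) (a : ℕ → ℤ) : Prop := ∀ n, 0 ≤ a n ∧ a n ≤ ⌈β n⌉ - 1

/-- The flip map `θ_β`. -/
noncomputable def theta (β : ℕ → ℝ) (a : ℕ → ℤ) : ℕ → ℤ := fun n => ⌈β n⌉ - 1 - a n

/-- The greedy remainders `r_{β,n}(x)`. -/
noncomputable def greedyR (β : ℕ → ℝ) (x : ℝ) : ℕ → ℝ
  | 0 => β 0 * x - (⌊β 0 * x⌋ : ℝ)
  | n + 1 => β (n + 1) * greedyR β x n - (⌊β (n + 1) * greedyR β x n⌋ : ℝ)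

/-- The greedy digits `ε_{β,n}(x)`; `greedyDigit β x` is the greedy β-expansion `d_β(x)`. -/
noncomputable def greedyDigit (β : ℕ → ℝ) (x : ℝ) : ℕ → ℤ
  | 0 => ⌊β 0 * x⌋
  | n + 1 => ⌊β (n + 1) * greedyR β x n⌋

/-- The lazy remainders `s_{β,n}(x)`. -/
noncomputable def lazyS (β : ℕ → ℝ) (x : ℝ) : ℕ → ℝ
  | 0 => β 0 * x - (⌈β 0 * x - xB (shiftBase β 1)⌉ : ℝ)
  | n + 1 => β (n + 1) * lazyS β x n -
      (⌈β (n + 1) * lazyS β x n - xB (shiftBase β (n + 2))⌉ : ℝ)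

/-- The lazy digits `ξ_{β,n}(x)`; `lazyDigit β x` is the lazy β-expansion `ℓ_β(x)`. -/
noncomputable def lazyDigit (β : ℕ → ℝ) (x : ℝ) : ℕ → ℤ
  | 0 => ⌈β 0 * x - xB (shiftBase β 1)⌉
  | n + 1 => ⌈β (n + 1) * lazyS β x n - xB (shiftBase β (n + 2))⌉

/-- Strict lexicographic order on infinite words. -/
def lexLt (a b : ℕ → ℤ) : Prop := ∃ k, (∀ i < k, a i = b i) ∧ a k < b k

/-- Lexicographic order on infinite words. -/
def lexLe (a b : ℕ → ℤ) : Prop := lexLt a b ∨ a = b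

/-- `D_β`, the set of greedy β-expansions of points of `[0,1)`. -/
def greedySet (β : ℕ → ℝ) : Set (ℕ → ℤ) :=
  {a | ∃ x ∈ Set.Ico (0 : ℝ) 1, a = greedyDigit β x}

/-- `D'_β`, the set of lazy β-expansions of points of `(x_β - 1, x_β]`. -/
def lazySet (β : ℕ → ℝ) : Set (ℕ → ℤ) :=
  {a | ∃ x ∈ Set.Ioc (xB β - 1) (xB β), a = lazyDigit β x}

/-- `Δ'_β = ⋃_n D'_{β^(n)}`. -/
def deltaSet (β : ℕ → ℝ) : Set (ℕ → ℤ) := ⋃ n, lazySet (shiftBase β n)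

/-!
Since `β_0 ⋯ β_n = β_0 · (β^(1))_0 ⋯ (β^(1))_{n-1}`, the numbers `x_{β^(n)}` satisfy
`β_n x_{β^(n)} = (⌈β_n⌉ - 1) + x_{β^(n+1)}`. Hence if the lazy remainder entering step `n` is
`x_{β^(n)} - r` for the greedy one `r`, the argument of the ceiling in the lazy step equals the
integer `⌈β_n⌉ - 1` minus the argument `β_n r` of the floor in the greedy step, and
`⌈c - y⌉ = c - ⌊y⌋` gives both the flipped digit and the next flipped remainder.
-/

theorem Int.ceil_intCast_sub {R : Type*} [Ring R] [LinearOrder R] [IsOrderedRing R] [FloorRing R]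
    (z : ℤ) (a : R) : ⌈(z : R) - a⌉ = z - ⌊a⌋ := by
  rw [← neg_sub, Int.ceil_neg, Int.floor_sub_intCast, neg_sub]

section CantorBase

variable {β : ℕ → ℝ}

theorem shiftBase_zero (β : ℕ → ℝ) : shiftBase β 0 = β := by
  funext m; simp [shiftBase]

theorem shiftBase_shiftBase (β : ℕ → ℝ) (k j : ℕ) :
    shiftBase (shiftBase β k) j = shiftBase β (k + j) := by
  funext m; simp [shiftBase, add_assoc]

theorem prodUpTo_succ (β : ℕ → ℝ) (n : ℕ) :
    prodUpTo β (n + 1) = β 0 * prodUpTo (shiftBase β 1) n := by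
  rw [prodUpTo, Finset.prod_range_succ', mul_comm]
  exact congrArg (β 0 * ·) (Finset.prod_congr rfl fun i _ => by rw [shiftBase, add_comm])

theorem prodUpTo_ne_zero (hβ : ∀ n, β n ≠ 0) (n : ℕ) : prodUpTo β n ≠ 0 :=
  Finset.prod_ne_zero_iff.2 fun i _ => hβ i

theorem ceil_sub_one_div_prodUpTo_shiftBase_one (hβ : ∀ n, β n ≠ 0) (n : ℕ) :
    ((⌈shiftBase β 1 n⌉ : ℝ) - 1) / prodUpTo (shiftBase β 1) n =
      β 0 * (((⌈β (n + 1)⌉ : ℝ) - 1) / prodUpTo β (n + 1)) := by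
  have hprod := prodUpTo_ne_zero (β := shiftBase β 1) (fun m => hβ _) n
  rw [prodUpTo_succ, shiftBase, add_comm 1 n]
  field_simp [hβ 0]

theorem XBSummable.shiftBase_one (hβ : ∀ n, β n ≠ 0) (hx : XBSummable β) :
    XBSummable (shiftBase β 1) :=
  (((summable_nat_add_iff 1).2 hx).mul_left (β 0)).congr fun n =>
    (ceil_sub_one_div_prodUpTo_shiftBase_one hβ n).symm

theorem XBSummable.shiftBase (hβ : ∀ n, β n ≠ 0) (hx : XBSummable β) (k : ℕ) :
    XBSummable (shiftBase β k) := by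
  induction k with
  | zero => rwa [shiftBase_zero]
  | succ k ih =>
    simpa only [shiftBase_shiftBase] using
      XBSummable.shiftBase_one (β := _root_.shiftBase β k) (fun n => hβ _) ih

theorem mul_xB (hβ : ∀ n, β n ≠ 0) (hx : XBSummable β) :
    β 0 * xB β = ((⌈β 0⌉ : ℝ) - 1) + xB (shiftBase β 1) := by
  rw [xB, hx.tsum_eq_zero_add, mul_add, ← tsum_mul_left, xB]
  congr 1
  · rw [prodUpTo, Finset.prod_range_one, mul_div_cancel₀ _ (hβ 0)]
  · exact tsum_congr fun n => (ceil_sub_one_div_prodUpTo_shiftBase_one hβ n).symm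

theorem mul_xB_shiftBase (hβ : ∀ n, β n ≠ 0) (hx : XBSummable β) (n : ℕ) :
    β n * xB (shiftBase β n) = ((⌈β n⌉ : ℝ) - 1) + xB (shiftBase β (n + 1)) := by
  simpa only [shiftBase_shiftBase, shiftBase, add_zero] using
    mul_xB (β := shiftBase β n) (fun m => hβ _) (hx.shiftBase hβ n)

theorem lazy_step_eq_flip_greedy_step (hβ : ∀ n, β n ≠ 0) (hx : XBSummable β) (n : ℕ) (r : ℝ) :
    ⌈β n * (xB (shiftBase β n) - r) - xB (shiftBase β (n + 1))⌉ = ⌈β n⌉ - 1 - ⌊β n * r⌋ ∧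
      β n * (xB (shiftBase β n) - r) -
          (⌈β n * (xB (shiftBase β n) - r) - xB (shiftBase β (n + 1))⌉ : ℝ) =
        xB (shiftBase β (n + 1)) - (β n * r - ⌊β n * r⌋) := by
  have hrec := mul_xB_shiftBase hβ hx n
  have harg : β n * (xB (shiftBase β n) - r) - xB (shiftBase β (n + 1)) =
      ((⌈β n⌉ - 1 : ℤ) : ℝ) - β n * r := by
    push_cast
    linear_combination hrec
  rw [harg, Int.ceil_intCast_sub]
  refine ⟨rfl, ?_⟩
  push_cast
  linear_combination hrec

theorem lazyDigit_lazyS_xB_sub (hβ : ∀ n, β n ≠ 0) (hx : XBSummable β) (x : ℝ) (n : ℕ) :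
    lazyDigit β (xB β - x) n = ⌈β n⌉ - 1 - greedyDigit β x n ∧
      lazyS β (xB β - x) n = xB (shiftBase β (n + 1)) - greedyR β x n := by
  induction n with
  | zero =>
    simpa only [lazyDigit, lazyS, greedyDigit, greedyR, shiftBase_zero] using
      lazy_step_eq_flip_greedy_step hβ hx 0 x
  | succ n ih =>
    simp only [lazyDigit, lazyS, greedyDigit, greedyR, ih.2]
    exact lazy_step_eq_flip_greedy_step hβ hx (n + 1) (greedyR β x n)

end CantorBase

/-- flipping greedy digits/remainders gives lazy ones; in particular
`ℓ_β(x_β − x) = θ_β(d_β(x))`. -/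
theorem lazy_eq_flip_greedy (β : ℕ → ℝ) (hβ : IsCantorBase β) (hx : XBSummable β) :
    ∀ x ∈ Set.Ico (0 : ℝ) 1,
      (∀ n : ℕ,
        lazyDigit β (xB β - x) n = ⌈β n⌉ - 1 - greedyDigit β x n ∧
        lazyS β (xB β - x) n = xB (shiftBase β (n + 1)) - greedyR β x n) ∧
      lazyDigit β (xB β - x) = theta β (greedyDigit β x) := by
  intro x _
  have hβ_ne : ∀ n, β n ≠ 0 := fun n => (zero_lt_one.trans (hβ.one_lt n)).ne'
  have flip := lazyDigit_lazyS_xB_sub hβ_ne hx x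
  exact ⟨flip, funext fun n => (flip n).1⟩
end

section
/- Let β=(β_n)_{n∈ℕ} be a Cantor base with x_β<+∞ and let x∈(x_β−1,x_β]. The lazy β-expansion ℓ_β(x) is lexicographically minimal among all β-representations a of x satisfying a_n∈[[0,⌈β_n⌉−1]] for all n∈ℕ. -/
open Filter Topology

/-
Suppose `a` agrees with `ℓ_β(x)` on its first `n` digits. Then the lazy remainder
`s_{β,n-1}(x)` equals `β_0 ⋯ β_{n-1} · Σ_{m ≥ n} a_m/(β_0 ⋯ β_m)`, so
`β_n s_{β,n-1}(x) = a_n + β_0 ⋯ β_n · Σ_{m > n} a_m/(β_0 ⋯ β_m)`. Bounding each later digit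
by `⌈β_m⌉ - 1` bounds the last term by `x_{β^(n+1)}`, whence `ξ_{β,n}(x) ≤ a_n`: at the first
position where the two words differ, the lazy digit is the smaller one.
-/

open Finset

lemma lexLe_of_forall_le {b a : ℕ → ℤ} (h : ∀ n, (∀ i < n, b i = a i) → b n ≤ a n) :
    lexLe b a := by
  by_cases hba : b = a
  · exact Or.inr hba
  · have hne : ∃ k, b k ≠ a k := Function.ne_iff.mp hba
    have hagree : ∀ i < Nat.find hne, b i = a i := fun i hi => not_not.mp (Nat.find_min hne hi)
    exact Or.inl ⟨Nat.find hne, hagree, (h _ hagree).lt_of_ne (Nat.find_spec hne)⟩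

namespace CantorBase

variable {β : ℕ → ℝ}

lemma prod_range_pos (hβ : ∀ n, 0 < β n) (n : ℕ) : 0 < ∏ i ∈ range n, β i :=
  prod_pos fun i _ => hβ i

lemma prodUpTo_pos (hβ : ∀ n, 0 < β n) (n : ℕ) : 0 < prodUpTo β n :=
  prod_range_pos hβ (n + 1)

lemma prodUpTo_add (β : ℕ → ℝ) (k m : ℕ) :
    prodUpTo β (m + k) = (∏ i ∈ range k, β i) * prodUpTo (shiftBase β k) m := by
  rw [prodUpTo, prodUpTo, add_right_comm, add_comm, prod_range_add]
  rfl

lemma prod_range_mul_tsum_eq_xB_shiftBase (hβ : ∀ n, 0 < β n) (k : ℕ) :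
    (∏ i ∈ range k, β i) * ∑' m, ((⌈β (m + k)⌉ : ℝ) - 1) / prodUpTo β (m + k) =
      xB (shiftBase β k) := by
  rw [xB, ← tsum_mul_left]
  refine tsum_congr fun m => ?_
  have hk := (prod_range_pos hβ k).ne'
  rw [prodUpTo_add, shiftBase, add_comm k m]
  field_simp

lemma digit_div_prodUpTo_le (hβ : ∀ n, 0 < β n) {a : ℕ → ℤ} {m : ℕ} (ha : a m ≤ ⌈β m⌉ - 1) :
    (a m : ℝ) / prodUpTo β m ≤ ((⌈β m⌉ : ℝ) - 1) / prodUpTo β m := by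
  gcongr
  · exact (prodUpTo_pos hβ m).le
  · exact_mod_cast ha

lemma summable_of_validWord (hβ : ∀ n, 0 < β n) (hx : XBSummable β) {a : ℕ → ℤ}
    (ha : validWord β a) : Summable fun m => (a m : ℝ) / prodUpTo β m :=
  hx.of_nonneg_of_le (fun m => div_nonneg (by exact_mod_cast (ha m).1) (prodUpTo_pos hβ m).le)
    fun m => digit_div_prodUpTo_le hβ (ha m).2

/-- `lazyRem β x n = s_{β,n-1}(x)`, with the convention `s_{β,-1}(x) = x`. -/
noncomputable def lazyRem (β : ℕ → ℝ) (x : ℝ) : ℕ → ℝ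
  | 0 => x
  | n + 1 => lazyS β x n

lemma lazyDigit_eq_ceil (β : ℕ → ℝ) (x : ℝ) (n : ℕ) :
    lazyDigit β x n = ⌈β n * lazyRem β x n - xB (shiftBase β (n + 1))⌉ := by
  cases n <;> rfl

lemma lazyRem_succ (β : ℕ → ℝ) (x : ℝ) (n : ℕ) :
    lazyRem β x (n + 1) = β n * lazyRem β x n - lazyDigit β x n := by
  cases n <;> rfl

lemma lazyRem_eq_prod_range_mul (hβ : ∀ n, 0 < β n) (x : ℝ) (n : ℕ) :
    lazyRem β x n = (∏ i ∈ range n, β i) *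
      (x - ∑ i ∈ range n, (lazyDigit β x i : ℝ) / prodUpTo β i) := by
  induction n with
  | zero => simp [lazyRem]
  | succ n ih =>
    have hprod := (prod_range_pos hβ n).ne'
    have hβn := (hβ n).ne'
    rw [lazyRem_succ, ih, prod_range_succ, sum_range_succ, prodUpTo, prod_range_succ]
    field_simp
    ring

lemma lazyDigit_le_of_forall_lt_eq (hβ : ∀ n, 0 < β n) (hx : XBSummable β) {x : ℝ} {a : ℕ → ℤ}
    (ha : ∀ m, a m ≤ ⌈β m⌉ - 1) (hsum : HasSum (fun m => (a m : ℝ) / prodUpTo β m) x) {n : ℕ}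
    (hpre : ∀ i < n, lazyDigit β x i = a i) : lazyDigit β x n ≤ a n := by
  set g : ℕ → ℝ := fun m => (a m : ℝ) / prodUpTo β m
  set f : ℕ → ℝ := fun m => ((⌈β m⌉ : ℝ) - 1) / prodUpTo β m
  have htailsum : x - ∑ i ∈ range n, g i = ∑' m, g (m + n) := by
    rw [← hsum.tsum_eq, ← hsum.summable.sum_add_tsum_nat_add n, add_sub_cancel_left]
  have hrem : lazyRem β x n = (∏ i ∈ range n, β i) * ∑' m, g (m + n) := by
    rw [lazyRem_eq_prod_range_mul hβ, ← htailsum,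
      sum_congr rfl fun i hi => by rw [hpre i (mem_range.mp hi)]]
  have htail : ∑' m, g (m + (n + 1)) ≤ ∑' m, f (m + (n + 1)) :=
    ((summable_nat_add_iff _).mpr hsum.summable).tsum_le_tsum
      (fun m => digit_div_prodUpTo_le hβ (ha _)) ((summable_nat_add_iff _).mpr hx)
  have hsplit : β n * lazyRem β x n = a n + prodUpTo β n * ∑' m, g (m + (n + 1)) := by
    have hprod : (∏ i ∈ range n, β i) * β n = prodUpTo β n := (prod_range_succ β n).symm
    rw [hrem, ((summable_nat_add_iff n).mpr hsum.summable).tsum_eq_zero_add, ← mul_assoc,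
      mul_comm (β n), hprod, mul_add, zero_add, mul_div_cancel₀ _ (prodUpTo_pos hβ n).ne']
    simp only [add_assoc, add_comm 1 n]
  have hxB : prodUpTo β n * ∑' m, f (m + (n + 1)) = xB (shiftBase β (n + 1)) :=
    prod_range_mul_tsum_eq_xB_shiftBase hβ (n + 1)
  have hscaled := mul_le_mul_of_nonneg_left htail (prodUpTo_pos hβ n).le
  rw [lazyDigit_eq_ceil, Int.ceil_le, hsplit, ← hxB]
  linarith

end CantorBase

theorem lazy_lex_minimal_general (β : ℕ → ℝ) (hβ : IsCantorBase β) (hx : XBSummable β)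
    (x : ℝ) :
    ∀ a : ℕ → ℤ, validWord β a → valB β a = x → lexLe (lazyDigit β x) a := by
  intro a ha hval
  have hpos : ∀ n, 0 < β n := fun n => one_pos.trans (hβ.one_lt n)
  have hsum : HasSum (fun m => (a m : ℝ) / prodUpTo β m) x :=
    hval ▸ (CantorBase.summable_of_validWord hpos hx ha).hasSum
  exact lexLe_of_forall_le fun n hpre =>
    CantorBase.lazyDigit_le_of_forall_lt_eq hpos hx (fun m => (ha m).2) hsum hpre

/-- the lazy β-expansion is lexicographically minimal among all
β-representations of `x` with digits in `[[0,⌈β_n⌉-1]]`. -/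
theorem lazy_lex_minimal (β : ℕ → ℝ) (hβ : IsCantorBase β) (hx : XBSummable β)
    (x : ℝ) (hmem : x ∈ Set.Ioc (xB β - 1) (xB β)) :
    ∀ a : ℕ → ℤ, validWord β a → valB β a = x → lexLe (lazyDigit β x) a :=
  lazy_lex_minimal_general β hβ hx x
end
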